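/- Let G be a 2-connected graph that is k-contractible to an optimal cycle C with C-witness structure W, and let u, v be degree-2 vertices such that G − {u, v} has exactly two connected components G_1 and G_2 each containing at least k + 1 vertices. Then {u} and {v} are small witness sets of W. -/
import Mathlib


open SimpleGraph

/-- Contraction of the edge `uv` in `G`: remove `v`, attaching its former
neighbours to `u`. -/
def SimpleGraph.contractEdge {V : Type} (G : SimpleGraph V) (u v : V) :
    SimpleGraph {x : V // x ≠ v} :=
  SimpleGraph.fromRel (fun a b =>
    G.Adj a.1 b.1 ∨ (a.1 = u ∧ G.Adj v b.1) ∨ (b.1 = u ∧ G.Adj v a.1))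

/-- `ContractsIn G H n` : `H` is obtained from `G` by exactly `n` edge contractions. -/
inductive ContractsIn : {V : Type} → SimpleGraph V → {W : Type} → SimpleGraph W → ℕ → Prop
  | iso {V : Type} {G : SimpleGraph V} {W : Type} {H : SimpleGraph W} :
      Nonempty (G ≃g H) → ContractsIn G H 0
  | step {V : Type} {G : SimpleGraph V} (u v : V) (huv : G.Adj u v)
      {W : Type} {H : SimpleGraph W} {n : ℕ} :
      ContractsIn (G.contractEdge u v) H n → ContractsIn G H (n + 1)

/-- `G` is contractible to `H`. -/
def ContractibleTo {V W : Type} (G : SimpleGraph V) (H : SimpleGraph W) : Prop :=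
  ∃ n, ContractsIn G H n

/-- `G` is `k`-contractible to `H` : `H` arises from `G` by at most `k` edge contractions. -/
def KContractible {V W : Type} (G : SimpleGraph V) (H : SimpleGraph W) (k : ℕ) : Prop :=
  ∃ n ≤ k, ContractsIn G H n

/-- An `H`-witness structure of `G`. -/
structure IsWitnessStructure {V W : Type} (G : SimpleGraph V) (H : SimpleGraph W)
    (Wit : W → Set V) : Prop where
  connected : ∀ h, (G.induce (Wit h)).Connected
  adj : ∀ h₁ h₂ : W, h₁ ≠ h₂ →
    (H.Adj h₁ h₂ ↔ ∃ a ∈ Wit h₁, ∃ b ∈ Wit h₂, G.Adj a b)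
  cover : ∀ v : V, ∃ h, v ∈ Wit h
  disjoint : ∀ h₁ h₂ : W, h₁ ≠ h₂ → Disjoint (Wit h₁) (Wit h₂)

/-- `P` is a path graph. -/
def IsPathGraph {W : Type} (P : SimpleGraph W) : Prop :=
  ∃ n, Nonempty (P ≃g SimpleGraph.pathGraph n)

/-- `C` is a cycle graph (on at least 3 vertices). -/
def IsCycleGraph {W : Type} (C : SimpleGraph W) : Prop :=
  ∃ n, 3 ≤ n ∧ Nonempty (C ≃g SimpleGraph.cycleGraph n)

/-- `G` is 2-edge-connected. -/
def TwoEdgeConnected {V : Type} (G : SimpleGraph V) : Prop :=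
  G.Connected ∧ ∀ e ∈ G.edgeSet, (G.deleteEdges {e}).Connected

/-- `G` is 2-connected. -/
def TwoConnected {V : Type} (G : SimpleGraph V) : Prop :=
  G.Connected ∧ 3 ≤ Nat.card V ∧ ∀ v : V, (G.induce {u | u ≠ v}).Connected

/-- `C₁` and `C₂` are (exactly the) two connected components of `G - {x, y}`. -/
def TwoComponents {V : Type} (G : SimpleGraph V) (x y : V) (C₁ C₂ : Set V) : Prop :=
  Disjoint C₁ C₂ ∧ C₁ ∪ C₂ = {v | v ≠ x ∧ v ≠ y} ∧
  C₁.Nonempty ∧ C₂.Nonempty ∧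
  (G.induce C₁).Connected ∧ (G.induce C₂).Connected ∧
  ∀ a ∈ C₁, ∀ b ∈ C₂, ¬ G.Adj a b

/-- `C` is an optimal (longest) cycle to which `G` can be contracted. -/
def OptimalCycle {V W : Type} (G : SimpleGraph V) (C : SimpleGraph W) : Prop :=
  IsCycleGraph C ∧ ContractibleTo G C ∧
  ∀ (W' : Type) (C' : SimpleGraph W'), IsCycleGraph C' → ContractibleTo G C' →
    Nat.card W' ≤ Nat.card W

/-- `G` can be contracted to a path, with `a` in one endpoint witness set and `b` in
the other, using at most `k` edge contractions. -/
def PathContractFixed {V : Type} (G : SimpleGraph V) (a b : V) (k : ℕ) : Prop :=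
  ∃ (n : ℕ) (Wit : Fin (n + 1) → Set V),
    IsWitnessStructure G (SimpleGraph.pathGraph (n + 1)) Wit ∧
    Nat.card V ≤ (n + 1) + k ∧
    ((a ∈ Wit 0 ∧ b ∈ Wit (Fin.last n)) ∨ (a ∈ Wit (Fin.last n) ∧ b ∈ Wit 0))

-- ============ helpers =============

/-- A connected graph cannot be split into two nonempty parts with no edges between. -/
lemma no_split {α : Type*} {G : SimpleGraph α} (hc : G.Preconnected)
    {S T : Set α} (hU : ∀ x, x ∈ S ∨ x ∈ T)
    (hd : Disjoint S T)
    (hST : ∀ a ∈ S, ∀ b ∈ T, ¬ G.Adj a b) {a b : α} (ha : a ∈ S) (hb : b ∈ T) : False := by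
  obtain ⟨w⟩ := hc a b
  induction w with
  | nil => exact Set.disjoint_left.mp hd ha hb
  | @cons x c y h p ih =>
    rcases hU c with hcS | hcT
    · exact ih hcS hb
    · exact hST _ ha _ hcT h

lemma contractEdge_adj {V : Type} {G : SimpleGraph V} {u v : V} {x y : {w : V // w ≠ v}} :
    (G.contractEdge u v).Adj x y ↔ x ≠ y ∧
      (G.Adj x.1 y.1 ∨ (x.1 = u ∧ G.Adj v y.1) ∨ (y.1 = u ∧ G.Adj v x.1)) := by
  unfold SimpleGraph.contractEdge
  rw [fromRel_adj]
  constructor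
  · rintro ⟨hne, h | h⟩
    · exact ⟨hne, h⟩
    · refine ⟨hne, ?_⟩
      rcases h with h | h | h
      · exact Or.inl h.symm
      · exact Or.inr (Or.inr h)
      · exact Or.inr (Or.inl h)
  · rintro ⟨hne, h⟩
    exact ⟨hne, Or.inl h⟩

lemma mem_unique {V W : Type} {G : SimpleGraph V} {H : SimpleGraph W} {Wit : W → Set V}
    (hW : IsWitnessStructure G H Wit) {x : V} {h₁ h₂ : W}
    (h1 : x ∈ Wit h₁) (h2 : x ∈ Wit h₂) : h₁ = h₂ := by
  by_contra hne
  exact Set.disjoint_left.mp (hW.disjoint h₁ h₂ hne) h1 h2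

lemma card_ne_add_one {V : Type} [Finite V] (v : V) :
    Nat.card {x : V // x ≠ v} + 1 = Nat.card V := by
  have h := Set.ncard_add_ncard_compl ({v} : Set V)
  have h2 : Nat.card {x : V // x ≠ v} = Nat.card ↥({v}ᶜ : Set V) :=
    Nat.card_congr (Equiv.subtypeEquivRight (fun x => by simp))
  rw [h2, Nat.card_coe_set_eq]
  rw [Set.ncard_singleton] at h
  omega

lemma contractsIn_card : ∀ {V : Type} {G : SimpleGraph V} {W : Type} {H : SimpleGraph W} {n : ℕ},
    ContractsIn G H n → Finite V → Nat.card V = Nat.card W + n := by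
  intro V G W H n h
  induction h with
  | iso h =>
    intro _
    obtain ⟨e⟩ := h
    simp [Nat.card_congr e.toEquiv]
  | @step V' G' u v huv W' H' n' h ih =>
    intro hf
    have hfin : Finite {x : V' // x ≠ v} := Subtype.finite
    have h1 := ih hfin
    have h2 := card_ne_add_one v
    omega

lemma connected_pair_adj {V : Type} {G : SimpleGraph V} {s : Set V}
    (hc : (G.induce s).Connected) {a b : V} (ha : a ∈ s) (hb : b ∈ s) (hne : a ≠ b) :
    ∃ x ∈ s, ∃ y ∈ s, G.Adj x y := by
  obtain ⟨w⟩ := hc.preconnected ⟨a, ha⟩ ⟨b, hb⟩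
  cases w with
  | nil => exact absurd rfl hne
  | @cons _ c _ h p => exact ⟨a, ha, c.1, c.2, h⟩

lemma contract_induce_connected {V : Type} {G : SimpleGraph V} {u v : V} (huv : G.Adj u v)
    {s : Set V} (hc : (G.induce s).Connected) (hus : v ∈ s → u ∈ s) :
    ((G.contractEdge u v).induce {z : {w : V // w ≠ v} | z.1 ∈ s}).Connected := by
  classical
  set G' := G.contractEdge u v with hG'
  set s' : Set {w : V // w ≠ v} := {z : {w : V // w ≠ v} | z.1 ∈ s} with hs'
  have hune : u ≠ v := huv.ne
  let π : s → s' := fun x =>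
    if hxv : (x : V) = v then ⟨⟨u, hune⟩, hus (hxv ▸ x.2)⟩ else ⟨⟨x, hxv⟩, x.2⟩
  have key : ∀ {x y : s}, (G.induce s).Walk x y → (G'.induce s').Reachable (π x) (π y) := by
    intro x y w
    induction w with
    | nil => exact Reachable.refl _
    | @cons x c y h p ih =>
      refine Reachable.trans ?_ ih
      have hadj : G.Adj x.1 c.1 := h
      by_cases hxv : (x : V) = v
      · by_cases hcv : (c : V) = v
        · exact absurd (hcv ▸ hxv ▸ hadj) (G.irrefl)
        · by_cases hcu : (c : V) = u
          · have heq : π x = π c := by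
              simp only [π, dif_pos hxv, dif_neg hcv]
              exact Subtype.ext (Subtype.ext hcu.symm)
            rw [heq]
          · have hvc : G.Adj v c.1 := hxv ▸ hadj
            have hA : G'.Adj ⟨u, hune⟩ ⟨c, hcv⟩ := by
              rw [hG', contractEdge_adj]
              exact ⟨fun hh => hcu (Subtype.mk_eq_mk.mp hh).symm,
                Or.inr (Or.inl ⟨rfl, hvc⟩)⟩
            have ex : π x = ⟨⟨u, hune⟩, hus (hxv ▸ x.2)⟩ := dif_pos hxv
            have ec : π c = ⟨⟨c, hcv⟩, c.2⟩ := dif_neg hcv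
            rw [ex, ec]
            exact Adj.reachable (by exact hA)
      · by_cases hcv : (c : V) = v
        · by_cases hxu : (x : V) = u
          · have heq : π x = π c := by
              simp only [π, dif_neg hxv, dif_pos hcv]
              exact Subtype.ext (Subtype.ext hxu)
            rw [heq]
          · have hvx : G.Adj v x.1 := (hcv ▸ hadj).symm
            have hA : G'.Adj ⟨x, hxv⟩ ⟨u, hune⟩ := by
              rw [hG', contractEdge_adj]
              exact ⟨fun hh => hxu (Subtype.mk_eq_mk.mp hh),
                Or.inr (Or.inr ⟨rfl, hvx⟩)⟩
            have ex : π x = ⟨⟨x, hxv⟩, x.2⟩ := dif_neg hxv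
            have ec : π c = ⟨⟨u, hune⟩, hus (hcv ▸ c.2)⟩ := dif_pos hcv
            rw [ex, ec]
            exact Adj.reachable (by exact hA)
        · have hA : G'.Adj ⟨x, hxv⟩ ⟨c, hcv⟩ := by
            rw [hG', contractEdge_adj]
            exact ⟨fun hh => hadj.ne (Subtype.mk_eq_mk.mp hh), Or.inl hadj⟩
          have ex : π x = ⟨⟨x, hxv⟩, x.2⟩ := dif_neg hxv
          have ec : π c = ⟨⟨c, hcv⟩, c.2⟩ := dif_neg hcv
          rw [ex, ec]
          exact Adj.reachable (by exact hA)
  have hne' : Nonempty ↥s' := by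
    obtain ⟨x⟩ := hc.nonempty
    exact ⟨π x⟩
  rw [connected_iff]
  refine ⟨?_, hne'⟩
  intro z₁ z₂
  have hz₁ : π ⟨z₁.1.1, z₁.2⟩ = z₁ := dif_neg z₁.1.2
  have hz₂ : π ⟨z₂.1.1, z₂.2⟩ = z₂ := dif_neg z₂.1.2
  rw [← hz₁, ← hz₂]
  exact key (hc.preconnected _ _).some

lemma witness_contract {V : Type} {W : Type} {G : SimpleGraph V} {H : SimpleGraph W}
    {Wit : W → Set V} (hW : IsWitnessStructure G H Wit) {h₀ : W} {a b : V}
    (ha : a ∈ Wit h₀) (hb : b ∈ Wit h₀) (hab : G.Adj a b) :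
    IsWitnessStructure (G.contractEdge a b) H
      (fun h => {z : {w : V // w ≠ b} | z.1 ∈ Wit h}) := by
  have hmemu : ∀ {x : V} {h h' : W}, x ∈ Wit h → x ∈ Wit h' → h = h' :=
    fun hx hx' => mem_unique hW hx hx'
  constructor
  · intro h
    refine contract_induce_connected hab (hW.connected h) (fun hbh => ?_)
    rwa [hmemu hb hbh] at ha
  · intro h₁ h₂ hne
    rw [hW.adj h₁ h₂ hne]
    constructor
    · rintro ⟨x, hx, y, hy, hxy⟩
      by_cases hxb : x = b
      · have h1 : h₁ = h₀ := hmemu (hxb ▸ hx) hb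
        have hyb : y ≠ b := by
          intro hyb
          exact hne (h1.trans (hmemu hb (hyb ▸ hy)))
        have hay : a ≠ y := by
          intro he
          exact hne (h1.trans (hmemu ha (he.symm ▸ hy)))
        refine ⟨⟨a, hab.ne⟩, h1.symm ▸ ha, ⟨y, hyb⟩, hy, ?_⟩
        rw [contractEdge_adj]
        exact ⟨fun hh => hay (Subtype.mk_eq_mk.mp hh),
          Or.inr (Or.inl ⟨rfl, hxb ▸ hxy⟩)⟩
      · by_cases hyb : y = b
        · have h2 : h₂ = h₀ := hmemu (hyb ▸ hy) hb
          have hax : a ≠ x := by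
            intro he
            exact hne ((h2.trans (hmemu ha (he.symm ▸ hx))).symm)
          refine ⟨⟨x, hxb⟩, hx, ⟨a, hab.ne⟩, h2.symm ▸ ha, ?_⟩
          rw [contractEdge_adj]
          exact ⟨fun hh => hax (Subtype.mk_eq_mk.mp hh).symm,
            Or.inr (Or.inr ⟨rfl, (hyb ▸ hxy).symm⟩)⟩
        · refine ⟨⟨x, hxb⟩, hx, ⟨y, hyb⟩, hy, ?_⟩
          rw [contractEdge_adj]
          exact ⟨fun hh => hxy.ne (Subtype.mk_eq_mk.mp hh), Or.inl hxy⟩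
    · rintro ⟨x, hx, y, hy, hxy⟩
      rw [contractEdge_adj] at hxy
      obtain ⟨hnexy, hc | ⟨hxa, hby⟩ | ⟨hya, hbx⟩⟩ := hxy
      · exact ⟨x.1, hx, y.1, hy, hc⟩
      · have h1 : h₁ = h₀ := hmemu (hxa ▸ hx) ha
        exact ⟨b, h1 ▸ hb, y.1, hy, hby⟩
      · have h2 : h₂ = h₀ := hmemu (hya ▸ hy) ha
        exact ⟨x.1, hx, b, h2 ▸ hb, hbx.symm⟩
  · intro z
    obtain ⟨h, hh⟩ := hW.cover z.1
    exact ⟨h, hh⟩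
  · intro h₁ h₂ hne
    rw [Set.disjoint_left]
    intro z hz1 hz2
    exact hne (hmemu hz1 hz2)

lemma singleton_sets_iso {V W : Type} {G : SimpleGraph V} {H : SimpleGraph W}
    {Wit : W → Set V} (hW : IsWitnessStructure G H Wit)
    (hs : ∀ h, ∀ x ∈ Wit h, ∀ y ∈ Wit h, x = y) : Nonempty (G ≃g H) := by
  classical
  have hf : ∀ x : V, x ∈ Wit (hW.cover x).choose := fun x => (hW.cover x).choose_spec
  set f : V → W := fun x => (hW.cover x).choose with hfdef
  have hg : ∀ h : W, ∃ x, x ∈ Wit h := by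
    intro h
    obtain ⟨x⟩ := (hW.connected h).nonempty
    exact ⟨x.1, x.2⟩
  set g : W → V := fun h => (hg h).choose with hgdef
  have hgmem : ∀ h, g h ∈ Wit h := fun h => (hg h).choose_spec
  have hleft : ∀ x, g (f x) = x := by
    intro x
    exact hs (f x) _ (hgmem (f x)) x (hf x)
  have hright : ∀ h, f (g h) = h := by
    intro h
    exact mem_unique hW (hf (g h)) (hgmem h)
  refine ⟨⟨⟨f, g, hleft, hright⟩, ?_⟩⟩
  intro x y
  simp only [Equiv.coe_fn_mk]
  constructor
  · intro hadj
    have hne : f x ≠ f y := hadj.ne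
    obtain ⟨x', hx', y', hy', hxy⟩ := (hW.adj _ _ hne).mp hadj
    rwa [hs (f x) x' hx' x (hf x), hs (f y) y' hy' y (hf y)] at hxy
  · intro hadj
    have hne : f x ≠ f y := by
      intro he
      exact hadj.ne (hs (f x) x (hf x) y (he ▸ hf y))
    exact (hW.adj _ _ hne).mpr ⟨x, hf x, y, hf y, hadj⟩

lemma witness_contractible_aux : ∀ (N : ℕ) (V : Type) (_ : Finite V) (W : Type)
    (G : SimpleGraph V) (H : SimpleGraph W) (Wit : W → Set V),
    Nat.card V ≤ N → IsWitnessStructure G H Wit → ContractibleTo G H := by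
  intro N
  induction N with
  | zero =>
    intro V hfin W G H Wit hcard hW
    have : Nat.card V = 0 := Nat.le_zero.mp hcard
    have hVempty : IsEmpty V :=
      (Nat.card_eq_zero.mp this).resolve_right (fun h => absurd hfin h.not_finite)
    have hWempty : IsEmpty W := by
      constructor
      intro h
      obtain ⟨x⟩ := (hW.connected h).nonempty
      exact hVempty.false x.1
    exact ⟨0, ContractsIn.iso ⟨⟨Equiv.equivOfIsEmpty V W, by
      intro x y
      exact hVempty.elim x⟩⟩⟩
  | succ N ih =>
    intro V hfin W G H Wit hcard hW
    by_cases hs : ∀ h, ∀ x ∈ Wit h, ∀ y ∈ Wit h, x = y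
    · exact ⟨0, ContractsIn.iso (singleton_sets_iso hW hs)⟩
    · push_neg at hs
      obtain ⟨h₀, x, hx, y, hy, hne⟩ := hs
      obtain ⟨p, hp, q, hq, hpq⟩ := connected_pair_adj (hW.connected h₀) hx hy hne
      have hW' := witness_contract hW hp hq hpq
      have hfin' : Finite {w : V // w ≠ q} := Subtype.finite
      have hcard' : Nat.card {w : V // w ≠ q} ≤ N := by
        have := card_ne_add_one (V := V) q
        omega
      obtain ⟨n, hn⟩ := ih _ hfin' _ _ _ _ hcard' hW'
      exact ⟨n + 1, ContractsIn.step p q hpq hn⟩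

lemma witness_contractible {V W : Type} [hfin : Finite V] {G : SimpleGraph V}
    {H : SimpleGraph W} {Wit : W → Set V} (hW : IsWitnessStructure G H Wit) :
    ContractibleTo G H :=
  witness_contractible_aux (Nat.card V) V hfin W G H Wit le_rfl hW

-- ===================== cycle graph helpers =====================

lemma fin_sub_val {m : ℕ} (a b : Fin m) :
    (a - b).val = ((m - b.val) + a.val) % m := by
  rw [Fin.sub_def]

lemma fin_val_one {m : ℕ} (hm : 2 ≤ m) [NeZero m] : ((1 : Fin m) : ℕ) = 1 := by
  rw [Fin.val_one', Nat.mod_eq_of_lt (by omega)]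

lemma fin_sub_val_eq_one_iff {m : ℕ} (hm : 2 ≤ m) {a b : Fin m} :
    (a - b).val = 1 ↔ (b.val + 1 = a.val ∨ (a.val = 0 ∧ b.val = m - 1)) := by
  have ha := a.isLt
  have hb := b.isLt
  rw [fin_sub_val]
  rcases Nat.lt_or_ge ((m - b.val) + a.val) m with h | h
  · rw [Nat.mod_eq_of_lt h]
    omega
  · rw [Nat.mod_eq_sub_mod h, Nat.mod_eq_of_lt (by omega)]
    omega

lemma cycleGraph_adj_iff {m : ℕ} (hm : 2 ≤ m) {a b : Fin m} :
    (cycleGraph m).Adj a b ↔ (a.val + 1 = b.val ∨ b.val + 1 = a.val ∨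
      (a.val = 0 ∧ b.val = m - 1) ∨ (b.val = 0 ∧ a.val = m - 1)) := by
  rw [cycleGraph_adj', fin_sub_val_eq_one_iff hm, fin_sub_val_eq_one_iff hm]
  tauto


lemma fin_sub_one_val {m : ℕ} (hm : 2 ≤ m) [NeZero m] {z : Fin m} (hz : 1 ≤ z.val) :
    (z - 1).val = z.val - 1 := by
  have hzlt := z.isLt
  rw [fin_sub_val, fin_val_one hm]
  rw [Nat.mod_eq_sub_mod (by omega), Nat.mod_eq_of_lt (by omega)]
  omega

/-- Removing an "initial segment" (of length t, starting at i) from a cycle leaves a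
connected graph. -/
lemma cycle_remove_connected {m t : ℕ} (hm : 3 ≤ m) (ht1 : 1 ≤ t) (htm : t ≤ m - 1)
    (i : Fin m) :
    ((cycleGraph m).induce {x : Fin m | t ≤ ((x - i : Fin m)).val}).Connected := by
  haveI : NeZero m := ⟨by omega⟩
  set s : Set (Fin m) := {x : Fin m | t ≤ ((x - i : Fin m)).val} with hs
  have hw₀mem : (i + ⟨t, by omega⟩ : Fin m) ∈ s := by
    simp only [hs, Set.mem_setOf_eq, add_sub_cancel_left]
    exact le_rfl
  set w₀ : ↥s := ⟨i + ⟨t, by omega⟩, hw₀mem⟩ with hw₀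
  have key : ∀ d : ℕ, ∀ x : Fin m, ∀ hx : x ∈ s, (x - i).val = d →
      ((cycleGraph m).induce s).Reachable ⟨x, hx⟩ w₀ := by
    intro d
    induction d using Nat.strong_induction_on with
    | _ d ih =>
      intro x hx hd
      have hts : t ≤ d := hd ▸ hx
      by_cases hdt : d = t
      · have h1 : x - i = (⟨t, by omega⟩ : Fin m) := by
          apply Fin.ext
          show (x - i).val = t
          omega
        have h2 : x = i + ⟨t, by omega⟩ := by
          have h3 := sub_add_cancel x i
          rw [h1] at h3
          rw [add_comm]
          exact h3.symm
        have h4 : (⟨x, hx⟩ : ↥s) = w₀ := Subtype.ext h2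
        rw [h4]
      · have hdlt : d < m := hd ▸ (x - i).isLt
        have hd2 : t + 1 ≤ d := by omega
        set y : Fin m := x - 1 with hy
        have hyi : y - i = (x - i) - 1 := sub_right_comm x 1 i
        have hyival : (y - i).val = d - 1 := by
          rw [hyi, fin_sub_one_val (by omega) (by omega : 1 ≤ (x - i).val), hd]
        have hys : y ∈ s := by
          simp only [hs, Set.mem_setOf_eq, hyival]
          omega
        have hedge : (cycleGraph m).Adj y x := by
          rw [cycleGraph_adj']
          right
          have h5 : x - y = 1 := sub_sub_cancel x 1
          rw [h5, fin_val_one (by omega : 2 ≤ m)]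
        have hreach := ih (d - 1) (by omega) y hys hyival
        exact Reachable.trans (Adj.reachable (by exact hedge.symm)) hreach
  rw [connected_iff]
  refine ⟨?_, ⟨w₀⟩⟩
  intro z₁ z₂
  exact (key _ z₁.1 z₁.2 rfl).trans (key _ z₂.1 z₂.2 rfl).symm

lemma fin_ne_iff_one_le {m : ℕ} [NeZero m] {x i : Fin m} :
    x ≠ i ↔ 1 ≤ ((x - i : Fin m)).val := by
  rw [← sub_ne_zero (a := x)]
  constructor
  · intro h
    have : (x - i).val ≠ 0 := fun hc => h (Fin.ext (by simpa using hc))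
    omega
  · intro h hc
    rw [hc] at h
    simp at h

lemma fin_ne_two_iff {m : ℕ} (hm : 2 ≤ m) [NeZero m] {x i : Fin m} :
    (x ≠ i ∧ x ≠ i + 1) ↔ 2 ≤ ((x - i : Fin m)).val := by
  rw [fin_ne_iff_one_le (i := i)]
  constructor
  · rintro ⟨h1, h2⟩
    rcases Nat.lt_or_ge ((x - i : Fin m)).val 2 with h | h
    · exfalso
      have : (x - i).val = 1 := by omega
      rw [fin_sub_val_eq_one_iff hm] at this
      have hxlt := x.isLt
      have hilt := i.isLt
      apply h2
      apply Fin.ext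
      rw [Fin.val_add, fin_val_one hm]
      rcases this with h' | ⟨h0, hl⟩
      · rw [Nat.mod_eq_of_lt (by omega)]
        omega
      · rw [hl]
        have he : m - 1 + 1 = m := by omega
        rw [he, Nat.mod_self]
        omega
    · exact h
  · intro h
    refine ⟨by omega, ?_⟩
    intro hc
    have : x - i = 1 := by
      rw [hc]
      rw [add_sub_cancel_left]
    rw [this, fin_val_one hm] at h
    omega

/-- Rotation automorphism of the cycle graph. -/
def cycleRot {m : ℕ} [NeZero m] (c : Fin m) : cycleGraph m ≃g cycleGraph m where
  toEquiv := Equiv.addRight c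
  map_rel_iff' := by
    intro a b
    simp only [Equiv.coe_addRight]
    rw [cycleGraph_adj', cycleGraph_adj', add_sub_add_right_eq_sub,
      add_sub_add_right_eq_sub]

/-- Reflection automorphism of the cycle graph. -/
def cycleRefl {m : ℕ} [NeZero m] (c : Fin m) : cycleGraph m ≃g cycleGraph m where
  toEquiv := Equiv.subLeft c
  map_rel_iff' := by
    intro a b
    simp only [Equiv.subLeft_apply]
    rw [cycleGraph_adj', cycleGraph_adj', sub_sub_sub_cancel_left,
      sub_sub_sub_cancel_left, or_comm]

lemma exists_iso_last_zero {W : Type} {C : SimpleGraph W} {m : ℕ} (hm : 3 ≤ m)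
    (e : C ≃g cycleGraph m) {h₀ q₀ : W} (hadj : C.Adj h₀ q₀) :
    ∃ σ : C ≃g cycleGraph m, (σ h₀).val = m - 1 ∧ (σ q₀).val = 0 := by
  haveI : NeZero m := ⟨by omega⟩
  have h0val : ((0 : Fin m)).val = 0 := by simp
  have hlast : ((⟨m - 1, by omega⟩ : Fin m) + 1) = 0 := by
    apply Fin.ext
    rw [Fin.val_add, fin_val_one (by omega), h0val]
    have he : m - 1 + 1 = m := by omega
    rw [he, Nat.mod_self]
  have hneg : ((0 : Fin m) - 1).val = m - 1 := by
    rw [fin_sub_val, fin_val_one (by omega), h0val]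
    rw [Nat.mod_eq_of_lt (by omega)]
    omega
  have hadj' : (cycleGraph m).Adj (e h₀) (e q₀) := by
    rw [e.map_rel_iff]
    exact hadj
  rw [cycleGraph_adj'] at hadj'
  rcases hadj' with h | h
  · -- e h₀ = 1 + e q₀ : use reflection through c = e q₀
    have h1 : e h₀ - e q₀ = 1 := by
      apply Fin.ext
      rw [h, fin_val_one (by omega)]
    have h2 : e h₀ = 1 + e q₀ := by
      rw [← h1, sub_add_cancel]
    refine ⟨e.trans (cycleRefl (e q₀)), ?_, ?_⟩
    · show ((Equiv.subLeft (e q₀)) (e h₀)).val = m - 1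
      rw [Equiv.subLeft_apply, h2]
      have hh : e q₀ - (1 + e q₀) = (0 : Fin m) - 1 := by abel
      rw [hh, hneg]
    · show ((Equiv.subLeft (e q₀)) (e q₀)).val = 0
      rw [Equiv.subLeft_apply, sub_self, h0val]
  · -- e q₀ = 1 + e h₀ : rotation
    have h1 : e q₀ - e h₀ = 1 := by
      apply Fin.ext
      rw [h, fin_val_one (by omega)]
    have h2 : e q₀ = 1 + e h₀ := by
      rw [← h1, sub_add_cancel]
    refine ⟨e.trans (cycleRot ((⟨m - 1, by omega⟩ : Fin m) - e h₀)), ?_, ?_⟩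
    · show (e h₀ + ((⟨m - 1, by omega⟩ : Fin m) - e h₀)).val = m - 1
      have hh : e h₀ + ((⟨m - 1, by omega⟩ : Fin m) - e h₀) = ⟨m - 1, by omega⟩ := by
        abel
      rw [hh]
    · show (e q₀ + ((⟨m - 1, by omega⟩ : Fin m) - e h₀)).val = 0
      rw [h2]
      have hh : 1 + e h₀ + ((⟨m - 1, by omega⟩ : Fin m) - e h₀) =
          (⟨m - 1, by omega⟩ : Fin m) + 1 := by abel
      rw [hh, hlast, h0val]

lemma fin_mk_eq {m a b : ℕ} (ha : a < m) (hb : b < m) (h : a = b) :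
    (⟨a, ha⟩ : Fin m) = ⟨b, hb⟩ := by
  subst h
  rfl

lemma insert_witness {V W : Type} {G : SimpleGraph V} {C : SimpleGraph W}
    {Wit : W → Set V} (hW : IsWitnessStructure G C Wit) {m : ℕ} (hm : 3 ≤ m)
    (σ : C ≃g cycleGraph m) {h₀ : W} (hσ : (σ h₀).val = m - 1)
    {A B : Set V}
    (hconA : (G.induce A).Connected) (hconB : (G.induce B).Connected)
    (hdisjAB : Disjoint A B) (hunion : A ∪ B = Wit h₀)
    (hp : ∃ a ∈ A, ∃ b ∈ Wit (σ.symm ⟨m - 2, by omega⟩), G.Adj a b)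
    (hq : ∃ a ∈ B, ∃ b ∈ Wit (σ.symm ⟨0, by omega⟩), G.Adj a b)
    (hnAq : ∀ a ∈ A, ∀ b ∈ Wit (σ.symm ⟨0, by omega⟩), ¬ G.Adj a b)
    (hnBp : ∀ a ∈ B, ∀ b ∈ Wit (σ.symm ⟨m - 2, by omega⟩), ¬ G.Adj a b)
    (hAB : ∃ a ∈ A, ∃ b ∈ B, G.Adj a b) :
    IsWitnessStructure G (cycleGraph (m + 1))
      (fun j => if hj : (j : ℕ) < m then
          (if (j : ℕ) = m - 1 then A else Wit (σ.symm ⟨j, hj⟩)) else B) := by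
  set W' : Fin (m + 1) → Set V := (fun j => if hj : (j : ℕ) < m then
      (if (j : ℕ) = m - 1 then A else Wit (σ.symm ⟨j, hj⟩)) else B) with hW'def
  have hW'old : ∀ (j : Fin (m + 1)) (h1 : (j : ℕ) < m), ¬ ((j : ℕ) = m - 1) →
      W' j = Wit (σ.symm ⟨j, h1⟩) := by
    intro j h1 h2
    simp only [hW'def]
    rw [dif_pos h1, if_neg h2]
  have hW'A : ∀ (j : Fin (m + 1)), (j : ℕ) < m → (j : ℕ) = m - 1 → W' j = A := by
    intro j h1 h2
    simp only [hW'def]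
    rw [dif_pos h1, if_pos h2]
  have hW'B : ∀ (j : Fin (m + 1)), ¬ ((j : ℕ) < m) → W' j = B := by
    intro j h1
    simp only [hW'def]
    rw [dif_neg h1]
  have hsymm_last : σ.symm ⟨m - 1, by omega⟩ = h₀ := by
    have h1 : σ h₀ = ⟨m - 1, by omega⟩ := Fin.ext hσ
    rw [← h1]
    exact σ.toEquiv.symm_apply_apply h₀
  have hsymm_ne : ∀ {x y : ℕ} (hx : x < m) (hy : y < m), x ≠ y →
      σ.symm ⟨x, hx⟩ ≠ σ.symm ⟨y, hy⟩ := by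
    intro x y hx hy hne hc
    exact hne (Fin.mk.injEq _ _ _ _ ▸ (σ.toEquiv.symm.injective hc))
  have hadjC : ∀ (x y : ℕ) (hx : x < m) (hy : y < m), x ≠ y →
      (C.Adj (σ.symm ⟨x, hx⟩) (σ.symm ⟨y, hy⟩) ↔
        (x + 1 = y ∨ y + 1 = x ∨ (x = 0 ∧ y = m - 1) ∨ (y = 0 ∧ x = m - 1))) := by
    intro x y hx hy hne
    rw [show C.Adj (σ.symm ⟨x, hx⟩) (σ.symm ⟨y, hy⟩) ↔
        (cycleGraph m).Adj ⟨x, hx⟩ ⟨y, hy⟩ from σ.symm.map_rel_iff,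
      cycleGraph_adj_iff (by omega)]
  have hAW : A ⊆ Wit h₀ := hunion ▸ Set.subset_union_left
  have hBW : B ⊆ Wit h₀ := hunion ▸ Set.subset_union_right
  have hedge_to_h₀ : ∀ (x : ℕ) (hx : x < m), x ≠ m - 1 →
      (∃ a ∈ Wit (σ.symm ⟨x, hx⟩), ∃ b ∈ Wit h₀, G.Adj a b) → x = m - 2 ∨ x = 0 := by
    intro x hx hne hedge
    rw [← hsymm_last] at hedge
    have hC := (hW.adj _ _ (hsymm_ne hx (by omega) hne)).mpr hedge
    rw [hadjC x (m - 1) hx (by omega) hne] at hC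
    omega
  constructor
  · -- connected
    intro j
    by_cases h1 : (j : ℕ) < m
    · by_cases h2 : (j : ℕ) = m - 1
      · rw [hW'A j h1 h2]; exact hconA
      · rw [hW'old j h1 h2]; exact hW.connected _
    · rw [hW'B j h1]; exact hconB
  · -- adjacency
    have main : ∀ j₁ j₂ : Fin (m + 1), (j₁ : ℕ) < (j₂ : ℕ) →
        ((cycleGraph (m + 1)).Adj j₁ j₂ ↔ ∃ a ∈ W' j₁, ∃ b ∈ W' j₂, G.Adj a b) := by
      intro j₁ j₂ hlt
      have hx1 := j₁.isLt
      have hy1 := j₂.isLt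
      rw [cycleGraph_adj_iff (by omega : 2 ≤ m + 1)]
      have hcase : (j₂ : ℕ) < m - 1 ∨ (j₂ : ℕ) = m - 1 ∨ (j₂ : ℕ) = m := by omega
      rcases hcase with hc | hc | hc
      · -- both are old sets
        rw [hW'old j₁ (by omega) (by omega), hW'old j₂ (by omega) (by omega)]
        rw [← hW.adj _ _ (hsymm_ne (by omega) (by omega) (by omega)),
          hadjC _ _ (by omega) (by omega) (by omega)]
        omega
      · -- j₂ is the A-position
        rw [hW'old j₁ (by omega) (by omega), hW'A j₂ (by omega) hc]
        constructor
        · intro hadj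
          have hx : (j₁ : ℕ) = m - 2 := by omega
          have hmk : (⟨(j₁ : ℕ), by omega⟩ : Fin m) = ⟨m - 2, by omega⟩ :=
            fin_mk_eq _ _ (by omega)
          rw [hmk]
          obtain ⟨a, ha, b, hb, hab⟩ := hp
          exact ⟨b, hb, a, ha, hab.symm⟩
        · rintro ⟨a, ha, b, hb, hab⟩
          have := hedge_to_h₀ (j₁ : ℕ) (by omega) (by omega) ⟨a, ha, b, hAW hb, hab⟩
          rcases this with h2 | h2
          · omega
          · exfalso
            have hmk : (⟨(j₁ : ℕ), by omega⟩ : Fin m) = ⟨0, by omega⟩ :=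
              fin_mk_eq _ _ (by omega)
            rw [hmk] at ha
            exact hnAq b hb a ha hab.symm
      · -- j₂ is the B-position
        rw [hW'B j₂ (by omega)]
        by_cases hx2 : (j₁ : ℕ) = m - 1
        · -- A next to B : always adjacent
          rw [hW'A j₁ (by omega) hx2]
          refine iff_of_true (by omega) hAB
        · rw [hW'old j₁ (by omega) hx2]
          constructor
          · intro hadj
            have hx : (j₁ : ℕ) = 0 := by omega
            have hmk : (⟨(j₁ : ℕ), by omega⟩ : Fin m) = ⟨0, by omega⟩ :=
              fin_mk_eq _ _ (by omega)
            rw [hmk]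
            obtain ⟨a, ha, b, hb, hab⟩ := hq
            exact ⟨b, hb, a, ha, hab.symm⟩
          · rintro ⟨a, ha, b, hb, hab⟩
            have := hedge_to_h₀ (j₁ : ℕ) (by omega) (by omega) ⟨a, ha, b, hBW hb, hab⟩
            rcases this with h2 | h2
            · exfalso
              have hmk : (⟨(j₁ : ℕ), by omega⟩ : Fin m) = ⟨m - 2, by omega⟩ :=
                fin_mk_eq _ _ (by omega)
              rw [hmk] at ha
              exact hnBp b hb a ha hab.symm
            · omega
    intro j₁ j₂ hne
    rcases Nat.lt_trichotomy (j₁ : ℕ) (j₂ : ℕ) with hlt | heq | hgt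
    · exact main j₁ j₂ hlt
    · exact absurd (Fin.ext heq) hne
    · rw [adj_comm]
      rw [main j₂ j₁ hgt]
      constructor
      · rintro ⟨a, ha, b, hb, hab⟩
        exact ⟨b, hb, a, ha, hab.symm⟩
      · rintro ⟨a, ha, b, hb, hab⟩
        exact ⟨b, hb, a, ha, hab.symm⟩
  · -- cover
    intro x
    obtain ⟨h, hx⟩ := hW.cover x
    by_cases hh : h = h₀
    · subst hh
      rw [← hunion] at hx
      rcases hx with hx | hx
      · refine ⟨⟨m - 1, by omega⟩, ?_⟩
        rw [hW'A _ (by simpa using by omega : ((⟨m - 1, by omega⟩ : Fin (m+1)) : ℕ) < m) rfl]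
        exact hx
      · refine ⟨⟨m, by omega⟩, ?_⟩
        rw [hW'B _ (by simp)]
        exact hx
    · refine ⟨⟨(σ h : Fin m), by omega⟩, ?_⟩
      have hv : ((⟨((σ h : Fin m) : ℕ), by omega⟩ : Fin (m + 1)) : ℕ) = (σ h : Fin m) := rfl
      have hne2 : ¬ (((σ h : Fin m)) : ℕ) = m - 1 := by
        intro hc
        have hc2 : σ h = ⟨m - 1, by omega⟩ := Fin.ext hc
        exact hh (by rw [← hsymm_last, ← hc2]; exact (σ.toEquiv.symm_apply_apply h).symm)
      rw [hW'old _ (by omega) (by rwa [hv])]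
      have : σ.symm ⟨(σ h : Fin m), (σ h).isLt⟩ = h := by
        have : (⟨((σ h : Fin m) : ℕ), (σ h).isLt⟩ : Fin m) = σ h := Fin.ext rfl
        rw [this]
        exact σ.toEquiv.symm_apply_apply h
      rw [show (⟨((⟨((σ h : Fin m) : ℕ), by omega⟩ : Fin (m+1)) : ℕ), by omega⟩ : Fin m)
          = ⟨(σ h : Fin m), (σ h).isLt⟩ from Fin.ext rfl, this]
      exact hx
  · -- disjoint
    have hne₀ : ∀ (x : ℕ) (hx : x < m), x ≠ m - 1 → h₀ ≠ σ.symm ⟨x, hx⟩ := by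
      intro x hx hxe
      rw [← hsymm_last]
      exact hsymm_ne (by omega) hx (by omega)
    intro j₁ j₂ hne
    have hvne : (j₁ : ℕ) ≠ (j₂ : ℕ) := fun hc => hne (Fin.ext hc)
    by_cases h1 : (j₁ : ℕ) < m
    · by_cases h2 : (j₁ : ℕ) = m - 1
      · rw [hW'A j₁ h1 h2]
        by_cases k1 : (j₂ : ℕ) < m
        · by_cases k2 : (j₂ : ℕ) = m - 1
          · exact absurd (h2.trans k2.symm) hvne
          · rw [hW'old j₂ k1 k2]
            exact (hW.disjoint h₀ _ (hne₀ _ k1 k2)).mono_left hAW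
        · rw [hW'B j₂ k1]
          exact hdisjAB
      · rw [hW'old j₁ h1 h2]
        by_cases k1 : (j₂ : ℕ) < m
        · by_cases k2 : (j₂ : ℕ) = m - 1
          · rw [hW'A j₂ k1 k2]
            exact ((hW.disjoint _ h₀ (hne₀ _ h1 h2).symm).mono_right hAW)
          · rw [hW'old j₂ k1 k2]
            exact hW.disjoint _ _ (hsymm_ne h1 k1 hvne)
        · rw [hW'B j₂ k1]
          exact (hW.disjoint _ h₀ (hne₀ _ h1 h2).symm).mono_right hBW
    · rw [hW'B j₁ h1]
      by_cases k1 : (j₂ : ℕ) < m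
      · by_cases k2 : (j₂ : ℕ) = m - 1
        · rw [hW'A j₂ k1 k2]
          exact hdisjAB.symm
        · rw [hW'old j₂ k1 k2]
          exact (hW.disjoint h₀ _ (hne₀ _ k1 k2)).mono_left hBW
      · exact absurd (by omega : (j₁ : ℕ) = (j₂ : ℕ)) hvne

lemma induce_singleton_connected {V : Type} (G : SimpleGraph V) (u : V) :
    (G.induce {u}).Connected := by
  rw [connected_iff]
  refine ⟨?_, ⟨⟨u, rfl⟩⟩⟩
  intro z₁ z₂
  have : z₁ = z₂ := Subtype.ext (z₁.2.trans z₂.2.symm)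
  rw [this]

lemma reachable_mono {V : Type} {G : SimpleGraph V} {s t : Set V} (hst : s ⊆ t)
    {x y : V} (hx : x ∈ s) (hy : y ∈ s)
    (h : (G.induce s).Reachable ⟨x, hx⟩ ⟨y, hy⟩) :
    (G.induce t).Reachable ⟨x, hst hx⟩ ⟨y, hst hy⟩ :=
  h.map (induceHomOfLE G hst).toHom

lemma induce_insert_connected {V : Type} {G : SimpleGraph V} {s : Set V}
    (hcon : (G.induce s).Connected) {u a : V} (ha : a ∈ s) (hadj : G.Adj u a) :
    (G.induce (insert u s)).Connected := by
  rw [connected_iff]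
  have hat : a ∈ insert u s := Set.mem_insert_of_mem _ ha
  refine ⟨?_, ⟨⟨a, hat⟩⟩⟩
  have key : ∀ z : ↥(insert u s), (G.induce (insert u s)).Reachable z ⟨a, hat⟩ := by
    intro z
    rcases z.2 with hz | hz
    · refine Adj.reachable ?_
      show G.Adj z.1 a
      rw [hz]
      exact hadj
    · have := reachable_mono (Set.subset_insert u s) hz ha
        (hcon.preconnected ⟨z.1, hz⟩ ⟨a, ha⟩)
      exact this
  intro z₁ z₂
  exact (key z₁).trans (key z₂).symm

lemma cycle_split_contra {V W : Type} {G : SimpleGraph V} {C : SimpleGraph W}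
    {Wit : W → Set V} (hW : IsWitnessStructure G C Wit) {m : ℕ}
    (e : C ≃g cycleGraph m) {s : Set (Fin m)}
    (hcon : ((cycleGraph m).induce s).Connected)
    {C₁ C₂ : Set V}
    (hcross : ∀ a ∈ C₁, ∀ b ∈ C₂, ¬ G.Adj a b)
    (hclass : ∀ x ∈ s, Wit (e.symm x) ⊆ C₁ ∨ Wit (e.symm x) ⊆ C₂)
    (hnb : ∀ h : W, ¬ (Wit h ⊆ C₁ ∧ Wit h ⊆ C₂))
    {t₁ t₂ : W} (ht₁s : e t₁ ∈ s) (ht₂s : e t₂ ∈ s)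
    (ht₁ : Wit t₁ ⊆ C₁) (ht₂ : Wit t₂ ⊆ C₂) : False := by
  refine no_split (G := (cycleGraph m).induce s) hcon.preconnected
    (S := {z : ↥s | Wit (e.symm z.1) ⊆ C₁}) (T := {z : ↥s | ¬ Wit (e.symm z.1) ⊆ C₁})
    (fun z => em _) ?_ ?_
    (a := ⟨e t₁, ht₁s⟩) (b := ⟨e t₂, ht₂s⟩) ?_ ?_
  · rw [Set.disjoint_left]
    exact fun z hz1 hz2 => hz2 hz1
  · intro z₁ hz₁ z₂ hz₂ hadj
    have hCadj : C.Adj (e.symm z₁.1) (e.symm z₂.1) := e.symm.map_rel_iff.mpr hadj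
    obtain ⟨a, ha, b, hb, hab⟩ := (hW.adj _ _ hCadj.ne).mp hCadj
    rcases hclass z₂.1 z₂.2 with hc | hc
    · exact hz₂ hc
    · exact hcross a (hz₁ ha) b (hc hb) hab
  · show Wit (e.symm (e t₁)) ⊆ C₁
    rw [e.symm_apply_apply]
    exact ht₁
  · show ¬ Wit (e.symm (e t₂)) ⊆ C₁
    rw [e.symm_apply_apply]
    exact fun hc => hnb t₂ ⟨hc, ht₂⟩

lemma exists_adj_side {V : Type} {G : SimpleGraph V} {v u : V} {D D' : Set V}
    (hcon : (G.induce {w : V | w ≠ v}).Connected)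
    (hcover : ∀ w : V, w ≠ v → w = u ∨ w ∈ D ∨ w ∈ D')
    (hDv : v ∉ D) (hune : u ≠ v)
    (hcross : ∀ a ∈ D, ∀ b ∈ D', ¬ G.Adj a b)
    (huD : u ∉ D) (hDne : D.Nonempty) : ∃ a ∈ D, G.Adj u a := by
  by_contra hno
  push_neg at hno
  obtain ⟨d, hd⟩ := hDne
  refine no_split (G := G.induce {w : V | w ≠ v}) hcon.preconnected
    (S := {z : ↥{w : V | w ≠ v} | z.1 ∈ D}) (T := {z : ↥{w : V | w ≠ v} | z.1 ∉ D})
    (fun z => em _) ?_ ?_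
    (a := ⟨d, fun hc => hDv (hc ▸ hd)⟩) (b := ⟨u, hune⟩) hd huD
  · rw [Set.disjoint_left]
    exact fun z hz1 hz2 => hz2 hz1
  · intro z₁ hz₁ z₂ hz₂ hadj
    have hGadj : G.Adj z₁.1 z₂.1 := hadj
    rcases hcover z₂.1 z₂.2 with hc | hc | hc
    · exact hno z₁.1 hz₁ (hc ▸ hGadj).symm
    · exact hz₂ hc
    · exact hcross z₁.1 hz₁ z₂.1 hc hGadj

lemma exists_subset_witness {V W : Type} [Finite V] [Finite W] {G : SimpleGraph V}
    {C : SimpleGraph W} {Wit : W → Set V} (hW : IsWitnessStructure G C Wit)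
    {D : Set V} (hcard : Nat.card V < Nat.card W + Nat.card ↥D) :
    ∃ t, Wit t ⊆ D := by
  classical
  by_contra hno
  push_neg at hno
  have hch : ∀ t : W, ∃ x, x ∈ Wit t ∧ x ∉ D := by
    intro t
    obtain ⟨x, hx1, hx2⟩ := Set.not_subset.mp (hno t)
    exact ⟨x, hx1, hx2⟩
  set ψ : W → ↥(Dᶜ) := fun t => ⟨(hch t).choose, (hch t).choose_spec.2⟩ with hψ
  have hinj : Function.Injective ψ := by
    intro t₁ t₂ he
    have h1 := (hch t₁).choose_spec.1
    have h2 := (hch t₂).choose_spec.1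
    have : (hch t₁).choose = (hch t₂).choose := congrArg Subtype.val he
    exact mem_unique hW h1 (this ▸ h2)
  have hle : Nat.card W ≤ Nat.card ↥(Dᶜ) := Nat.card_le_card_of_injective ψ hinj
  have hsum : D.ncard + Dᶜ.ncard = Nat.card V := Set.ncard_add_ncard_compl D
  rw [← Nat.card_coe_set_eq, ← Nat.card_coe_set_eq] at hsum
  omega

lemma witness_reach_side {V W : Type} {G : SimpleGraph V} {C : SimpleGraph W}
    {Wit : W → Set V} (hW : IsWitnessStructure G C Wit)
    {hu : W} {u aN : V} {D D'' : Set V}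
    (hfu : u ∈ Wit hu)
    (hsplit : ∀ x ∈ Wit hu, x ≠ u → x ∈ D ∨ x ∈ D'')
    (hcross : ∀ a ∈ D, ∀ b ∈ D'', ¬ G.Adj a b)
    (huD : u ∉ D)
    (hNuniq : ∀ w', G.Adj u w' → w' ∈ D → w' = aN)
    {x : V} (hx : x ∈ Wit hu) (hxD : x ∈ D) :
    ∃ ha : aN ∈ Wit hu ∩ D,
      (G.induce (Wit hu ∩ D)).Reachable ⟨x, ⟨hx, hxD⟩⟩ ⟨aN, ha⟩ := by
  have key : ∀ (p q : ↥(Wit hu)) (w : (G.induce (Wit hu)).Walk p q), q.1 = u →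
      ∀ hpD : p.1 ∈ D, ∃ ha : aN ∈ Wit hu ∩ D,
        (G.induce (Wit hu ∩ D)).Reachable ⟨p.1, ⟨p.2, hpD⟩⟩ ⟨aN, ha⟩ := by
    intro p q w
    induction w with
    | nil =>
      intro hq hpD
      rw [hq] at hpD
      exact absurd hpD huD
    | @cons p c _ h pw ih =>
      intro hq hpD
      have hGadj : G.Adj p.1 c.1 := h
      by_cases hcu : c.1 = u
      · have hpa : p.1 = aN := hNuniq p.1 (hcu ▸ hGadj).symm hpD
        refine ⟨hpa ▸ ⟨p.2, hpD⟩, ?_⟩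
        have heq : (⟨p.1, ⟨p.2, hpD⟩⟩ : ↥(Wit hu ∩ D)) = ⟨aN, hpa ▸ ⟨p.2, hpD⟩⟩ :=
          Subtype.ext hpa
        rw [← heq]
      · rcases hsplit c.1 c.2 hcu with hcD | hcD
        · obtain ⟨ha, hr⟩ := ih hq hcD
          refine ⟨ha, ?_⟩
          refine Reachable.trans (Adj.reachable ?_) hr
          show G.Adj p.1 c.1
          exact hGadj
        · exact absurd hGadj (hcross p.1 hpD c.1 hcD)
  exact key ⟨x, hx⟩ ⟨u, hfu⟩ ((hW.connected hu).preconnected ⟨x, hx⟩ ⟨u, hfu⟩).some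
    rfl hxD

lemma far_empty_case {V W : Type} {G : SimpleGraph V} {C : SimpleGraph W}
    {Wit : W → Set V} (hW : IsWitnessStructure G C Wit) {m : ℕ} (hm : 3 ≤ m)
    (e : C ≃g cycleGraph m) {hu : W} {u aN aF : V} {D D' : Set V}
    (hfu : u ∈ Wit hu)
    (hcross : ∀ a ∈ D, ∀ b ∈ D', ¬ G.Adj a b)
    (huD : u ∉ D)
    (hsplit : ∀ x ∈ Wit hu, x ≠ u → x ∈ D ∨ x ∈ D')
    (hKempty : Wit hu ∩ D' = ∅)
    (hKcon : (G.induce (Wit hu ∩ D)).Connected)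
    (haN : aN ∈ Wit hu ∩ D)
    (hadjN : G.Adj u aN)
    (hadjF : G.Adj u aF)
    (huniq : ∀ w', G.Adj u w' → w' = aN ∨ w' = aF)
    {q₀ : W} (hq₀ : aF ∈ Wit q₀) (hFD' : aF ∈ D') (hWitq₀ : Wit q₀ ⊆ D') :
    ∃ Wit' : Fin (m + 1) → Set V, IsWitnessStructure G (cycleGraph (m + 1)) Wit' := by
  have hq₀ne : q₀ ≠ hu := by
    intro hc
    have : aF ∈ Wit hu ∩ D' := ⟨hc ▸ hq₀, hFD'⟩
    rw [hKempty] at this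
    exact this
  have hCadj : C.Adj hu q₀ := (hW.adj hu q₀ hq₀ne.symm).mpr ⟨u, hfu, aF, hq₀, hadjF⟩
  obtain ⟨σ, hσu, hσq⟩ := exists_iso_last_zero hm e hCadj
  have hQ : σ.symm ⟨0, by omega⟩ = q₀ := by
    have h1 : σ q₀ = ⟨0, by omega⟩ := Fin.ext hσq
    rw [← h1]
    exact σ.symm_apply_apply q₀
  have hhu : σ.symm ⟨m - 1, by omega⟩ = hu := by
    have h1 : σ hu = ⟨m - 1, by omega⟩ := Fin.ext hσu
    rw [← h1]
    exact σ.symm_apply_apply hu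
  set P : W := σ.symm ⟨m - 2, by omega⟩ with hPdef
  have hPne_hu : P ≠ hu := by
    rw [hPdef, ← hhu]
    intro hc
    have := σ.toEquiv.symm.injective hc
    have := congrArg Fin.val this
    simp only at this
    omega
  have hPne_q₀ : P ≠ q₀ := by
    rw [hPdef, ← hQ]
    intro hc
    have := σ.toEquiv.symm.injective hc
    have := congrArg Fin.val this
    simp only at this
    omega
  have hCadjP : C.Adj hu P := by
    rw [← hhu, hPdef]
    rw [show C.Adj (σ.symm ⟨m - 1, by omega⟩) (σ.symm ⟨m - 2, by omega⟩) ↔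
      (cycleGraph m).Adj ⟨m - 1, by omega⟩ ⟨m - 2, by omega⟩ from σ.symm.map_rel_iff]
    rw [cycleGraph_adj_iff (by omega)]
    exact Or.inr (Or.inl (show m - 2 + 1 = m - 1 by omega))
  -- the main application
  refine ⟨_, insert_witness hW hm σ hσu (A := Wit hu ∩ D) (B := {u})
    hKcon (induce_singleton_connected G u) ?_ ?_ ?_ ?_ ?_ ?_ ?_⟩
  · -- Disjoint (Wit hu ∩ D) {u}
    rw [Set.disjoint_singleton_right]
    exact fun hc => huD hc.2
  · -- union
    apply Set.Subset.antisymm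
    · intro x hx
      rcases hx with hx | hx
      · exact hx.1
      · rw [hx]
        exact hfu
    · intro x hx
      by_cases hxu : x = u
      · exact Or.inr hxu
      · rcases hsplit x hx hxu with hc | hc
        · exact Or.inl ⟨hx, hc⟩
        · exact absurd (hKempty ▸ (⟨hx, hc⟩ : x ∈ Wit hu ∩ D')) (Set.notMem_empty x)
  · -- hp : edge from A to Wit P
    obtain ⟨x, hx, y, hy, hxy⟩ := (hW.adj hu P (Ne.symm hPne_hu)).mp hCadjP
    have hxu : x ≠ u := by
      intro hc
      rcases huniq y (hc ▸ hxy) with hy2 | hy2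
      · exact Set.disjoint_left.mp (hW.disjoint hu P (Ne.symm hPne_hu)) haN.1 (hy2 ▸ hy)
      · exact Set.disjoint_left.mp (hW.disjoint q₀ P (Ne.symm hPne_q₀)) hq₀ (hy2 ▸ hy)
    rcases hsplit x hx hxu with hc | hc
    · exact ⟨x, ⟨hx, hc⟩, y, hy, hxy⟩
    · exact absurd (hKempty ▸ (⟨hx, hc⟩ : x ∈ Wit hu ∩ D')) (Set.notMem_empty x)
  · -- hq : edge from B={u} to Wit Q
    rw [hQ]
    exact ⟨u, rfl, aF, hq₀, hadjF⟩
  · -- hnAq : no edge from A to Wit Q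
    rw [hQ]
    intro a ha b hb hab
    exact hcross a ha.2 b (hWitq₀ hb) hab
  · -- hnBp : no edge from B={u} to Wit P
    intro a ha b hb hab
    have hau : a = u := ha
    rcases huniq b (hau ▸ hab) with hb2 | hb2
    · exact Set.disjoint_left.mp (hW.disjoint hu P (Ne.symm hPne_hu)) (hb2 ▸ haN.1) hb
    · exact Set.disjoint_left.mp (hW.disjoint q₀ P (Ne.symm hPne_q₀)) (hb2 ▸ hq₀) hb
  · -- hAB
    exact ⟨aN, haN, u, rfl, hadjN.symm⟩

set_option maxHeartbeats 1000000 in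
lemma both_sides_case {V W : Type} {G : SimpleGraph V} {C : SimpleGraph W}
    {Wit : W → Set V} (hW : IsWitnessStructure G C Wit) {m : ℕ} (hm : 3 ≤ m)
    (e : C ≃g cycleGraph m) {hu hv : W} {u a₁ a₂ : V} {C₁ C₂ : Set V}
    (hfu : u ∈ Wit hu)
    (hne_uv : hu ≠ hv) (hCadj_uv : ¬ C.Adj hu hv)
    (hdisj12 : Disjoint C₁ C₂)
    (hcross : ∀ a ∈ C₁, ∀ b ∈ C₂, ¬ G.Adj a b)
    (huC₁ : u ∉ C₁) (huC₂ : u ∉ C₂)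
    (hside : ∀ h : W, h ≠ hu → h ≠ hv → Wit h ⊆ C₁ ∨ Wit h ⊆ C₂)
    (hnb : ∀ h : W, ¬ (Wit h ⊆ C₁ ∧ Wit h ⊆ C₂))
    {t₁ t₂ : W} (ht₁ : Wit t₁ ⊆ C₁) (ht₂ : Wit t₂ ⊆ C₂)
    (ht₁u : t₁ ≠ hu) (ht₁v : t₁ ≠ hv) (ht₂u : t₂ ≠ hu) (ht₂v : t₂ ≠ hv)
    (hsplitu : ∀ x ∈ Wit hu, x ≠ u → x ∈ C₁ ∨ x ∈ C₂)
    (hK₁ : a₁ ∈ Wit hu ∩ C₁) (hK₂ : a₂ ∈ Wit hu ∩ C₂)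
    (hK₁con : (G.induce (Wit hu ∩ C₁)).Connected)
    (hK₂con : (G.induce (Wit hu ∩ C₂)).Connected)
    (hadj₁ : G.Adj u a₁) (hadj₂ : G.Adj u a₂)
    (huniq : ∀ w', G.Adj u w' → w' = a₁ ∨ w' = a₂) :
    ∃ Wit' : Fin (m + 1) → Set V, IsWitnessStructure G (cycleGraph (m + 1)) Wit' := by
  haveI : NeZero m := ⟨by omega⟩
  -- a rotated iso putting hu at position m-1
  have hcyc_nb : (cycleGraph m).Adj (e hu) (e hu + 1) := by
    rw [cycleGraph_adj']
    right
    rw [add_sub_cancel_left, fin_val_one (by omega)]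
  have hCadj_nb : C.Adj hu (e.symm (e hu + 1)) := by
    have h1 := e.symm.map_rel_iff.mpr hcyc_nb
    rwa [e.symm_apply_apply] at h1
  obtain ⟨σ₀, hσ₀u, _⟩ := exists_iso_last_zero hm e hCadj_nb
  have hhu0 : σ₀.symm ⟨m - 1, by omega⟩ = hu := by
    have h1 : σ₀ hu = ⟨m - 1, by omega⟩ := Fin.ext hσ₀u
    rw [← h1]
    exact σ₀.symm_apply_apply hu
  set jv : ℕ := (σ₀ hv).val with hjvdef
  have hjvm : jv < m := (σ₀ hv).isLt
  have hjv_ne : jv ≠ m - 1 := by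
    intro hc
    exact hne_uv (σ₀.toEquiv.injective (Fin.ext (hσ₀u.trans hc.symm)))
  have hnadj_pos : ¬ (cycleGraph m).Adj (σ₀ hu) (σ₀ hv) := by
    rw [σ₀.map_rel_iff]
    exact hCadj_uv
  rw [cycleGraph_adj_iff (by omega), hσ₀u] at hnadj_pos
  push_neg at hnadj_pos
  have hjv2 : jv ≠ m - 2 := by
    intro hc
    exact hnadj_pos.2.1 (by omega)
  have hjv0 : jv ≠ 0 := by
    intro hc
    exact (hnadj_pos.2.2.2 hc) rfl
  have hjv3 : jv ≤ m - 3 := by omega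
  have hjv1 : 1 ≤ jv := by omega
  -- position helpers
  have hpos_ne : ∀ (x : ℕ) (hx : x < m), x ≠ m - 1 → x ≠ jv →
      σ₀.symm ⟨x, hx⟩ ≠ hu ∧ σ₀.symm ⟨x, hx⟩ ≠ hv := by
    intro x hx h1 h2
    constructor
    · rw [← hhu0]
      intro hc
      exact h1 (congrArg Fin.val (σ₀.toEquiv.symm.injective hc))
    · intro hc
      apply h2
      have := congrArg σ₀ hc
      rw [σ₀.apply_symm_apply] at this
      exact congrArg Fin.val this
  have hS : ∀ (x : ℕ) (hx : x < m), x ≠ m - 1 → x ≠ jv →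
      Wit (σ₀.symm ⟨x, hx⟩) ⊆ C₁ ∨ Wit (σ₀.symm ⟨x, hx⟩) ⊆ C₂ := by
    intro x hx h1 h2
    exact hside _ (hpos_ne x hx h1 h2).1 (hpos_ne x hx h1 h2).2
  have same_side : ∀ (x y : ℕ) (hx : x < m) (hy : y < m), x ≠ m - 1 → x ≠ jv →
      y ≠ m - 1 → y ≠ jv → (cycleGraph m).Adj ⟨x, hx⟩ ⟨y, hy⟩ →
      Wit (σ₀.symm ⟨x, hx⟩) ⊆ C₁ → Wit (σ₀.symm ⟨y, hy⟩) ⊆ C₁ := by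
    intro x y hx hy hx1 hx2 hy1 hy2 hadj hsub
    have hCa : C.Adj (σ₀.symm ⟨x, hx⟩) (σ₀.symm ⟨y, hy⟩) := σ₀.symm.map_rel_iff.mpr hadj
    obtain ⟨a, ha, b, hb, hab⟩ := (hW.adj _ _ hCa.ne).mp hCa
    rcases hS y hy hy1 hy2 with hc | hc
    · exact hc
    · exact absurd hab (hcross a (hsub ha) b (hc hb))
  have indA : ∀ x : ℕ, ∀ hx : x < jv,
      (Wit (σ₀.symm ⟨x, by omega⟩) ⊆ C₁ ↔ Wit (σ₀.symm ⟨0, by omega⟩) ⊆ C₁) := by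
    intro x
    induction x with
    | zero => intro hx; exact Iff.rfl
    | succ n ih =>
      intro hx
      have hih := ih (by omega)
      have hadjn : (cycleGraph m).Adj ⟨n + 1, by omega⟩ ⟨n, by omega⟩ := by
        rw [cycleGraph_adj_iff (by omega)]
        exact Or.inr (Or.inl rfl)
      constructor
      · intro h
        exact hih.mp (same_side (n+1) n (by omega) (by omega) (by omega) (by omega)
          (by omega) (by omega) hadjn h)
      · intro h
        exact same_side n (n+1) (by omega) (by omega) (by omega) (by omega)
          (by omega) (by omega) hadjn.symm (hih.mpr h)
  have indB : ∀ d x : ℕ, ∀ (h1 : jv < x) (h2 : x + d = m - 2),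
      (Wit (σ₀.symm ⟨x, by omega⟩) ⊆ C₁ ↔ Wit (σ₀.symm ⟨m - 2, by omega⟩) ⊆ C₁) := by
    intro d
    induction d with
    | zero =>
      intro x hx1 hx2
      have : (⟨x, by omega⟩ : Fin m) = ⟨m - 2, by omega⟩ := fin_mk_eq _ _ (by omega)
      rw [this]
    | succ d ih =>
      intro x hx1 hx2
      have hih := ih (x + 1) (by omega) (by omega)
      have hadjn : (cycleGraph m).Adj ⟨x, by omega⟩ ⟨x + 1, by omega⟩ := by
        rw [cycleGraph_adj_iff (by omega)]
        exact Or.inl rfl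
      constructor
      · intro h
        exact hih.mp (same_side x (x+1) (by omega) (by omega) (by omega) (by omega)
          (by omega) (by omega) hadjn h)
      · intro h
        exact same_side (x+1) x (by omega) (by omega) (by omega) (by omega)
          (by omega) (by omega) hadjn.symm (hih.mpr h)
  -- positions of t₁ and t₂
  have hpos : ∀ t : W, t ≠ hu → t ≠ hv → ∃ (x : ℕ) (hx : x < m), x ≠ m - 1 ∧ x ≠ jv ∧
      σ₀.symm ⟨x, hx⟩ = t := by
    intro t htu htv
    refine ⟨(σ₀ t).val, (σ₀ t).isLt, ?_, ?_, ?_⟩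
    · intro hc
      exact htu (σ₀.toEquiv.injective (Fin.ext (hc.trans hσ₀u.symm)))
    · intro hc
      exact htv (σ₀.toEquiv.injective (Fin.ext hc))
    · have : (⟨(σ₀ t).val, (σ₀ t).isLt⟩ : Fin m) = σ₀ t := Fin.ext rfl
      rw [this]
      exact σ₀.symm_apply_apply t
  obtain ⟨x₁, hx₁m, hx₁a, hx₁b, hx₁e⟩ := hpos t₁ ht₁u ht₁v
  obtain ⟨x₂, hx₂m, hx₂a, hx₂b, hx₂e⟩ := hpos t₂ ht₂u ht₂v
  have hS1x₁ : Wit (σ₀.symm ⟨x₁, hx₁m⟩) ⊆ C₁ := by rw [hx₁e]; exact ht₁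
  have hS1x₂ : ¬ Wit (σ₀.symm ⟨x₂, hx₂m⟩) ⊆ C₁ := by
    rw [hx₂e]
    exact fun hc => hnb t₂ ⟨hc, ht₂⟩
  have hor₁ : Wit (σ₀.symm ⟨0, by omega⟩) ⊆ C₁ ∨ Wit (σ₀.symm ⟨m - 2, by omega⟩) ⊆ C₁ := by
    rcases Nat.lt_or_ge x₁ jv with h | h
    · exact Or.inl ((indA x₁ h).mp hS1x₁)
    · exact Or.inr ((indB (m - 2 - x₁) x₁ (by omega) (by omega)).mp hS1x₁)
  have hor₂ : ¬ Wit (σ₀.symm ⟨0, by omega⟩) ⊆ C₁ ∨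
      ¬ Wit (σ₀.symm ⟨m - 2, by omega⟩) ⊆ C₁ := by
    rcases Nat.lt_or_ge x₂ jv with h | h
    · exact Or.inl (fun hc => hS1x₂ ((indA x₂ h).mpr hc))
    · exact Or.inr (fun hc => hS1x₂ ((indB (m - 2 - x₂) x₂ (by omega) (by omega)).mpr hc))
  -- choose the final iso σ with position m-2 on the C₁ side and position 0 on the C₂ side
  have hσfinal : ∃ σ : C ≃g cycleGraph m, (σ hu).val = m - 1 ∧
      Wit (σ.symm ⟨m - 2, by omega⟩) ⊆ C₁ ∧ Wit (σ.symm ⟨0, by omega⟩) ⊆ C₂ := by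
    rcases hor₁ with hc1 | hc1
    · -- position 0 is C₁ side: reflect
      have hc2 : Wit (σ₀.symm ⟨m - 2, by omega⟩) ⊆ C₂ := by
        rcases hor₂ with h | h
        · exact absurd hc1 h
        · rcases hS (m - 2) (by omega) (by omega) (by omega) with h' | h'
          · exact absurd h' h
          · exact h'
      have happ : ∀ w' : W, (σ₀.trans (cycleRefl (⟨m - 2, by omega⟩ : Fin m))) w'
          = (⟨m - 2, by omega⟩ : Fin m) - σ₀ w' := fun _ => rfl
      refine ⟨σ₀.trans (cycleRefl ⟨m - 2, by omega⟩), ?_, ?_, ?_⟩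
      · rw [happ]
        have h1 : σ₀ hu = ⟨m - 1, by omega⟩ := Fin.ext hσ₀u
        rw [h1, fin_sub_val]
        show (m - (m - 1) + (m - 2)) % m = m - 1
        rw [Nat.mod_eq_of_lt (by omega)]
        omega
      · have hfwd : (σ₀.trans (cycleRefl (⟨m - 2, by omega⟩ : Fin m))) (σ₀.symm ⟨0, by omega⟩)
            = ⟨m - 2, by omega⟩ := by
          rw [happ, σ₀.apply_symm_apply]
          apply Fin.ext
          rw [fin_sub_val]
          show (m - 0 + (m - 2)) % m = m - 2
          rw [Nat.mod_eq_sub_mod (by omega), Nat.mod_eq_of_lt (by omega)]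
          omega
        have h2 : (σ₀.trans (cycleRefl (⟨m - 2, by omega⟩ : Fin m))).symm ⟨m - 2, by omega⟩
            = σ₀.symm ⟨0, by omega⟩ := by
          apply (σ₀.trans (cycleRefl (⟨m - 2, by omega⟩ : Fin m))).injective
          rw [RelIso.apply_symm_apply]
          exact hfwd.symm
        rw [h2]
        exact hc1
      · have hfwd : (σ₀.trans (cycleRefl (⟨m - 2, by omega⟩ : Fin m)))
            (σ₀.symm ⟨m - 2, by omega⟩) = ⟨0, by omega⟩ := by
          rw [happ, σ₀.apply_symm_apply]
          apply Fin.ext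
          rw [fin_sub_val]
          show (m - (m - 2) + (m - 2)) % m = 0
          have h2 : m - (m - 2) + (m - 2) = m := by omega
          rw [h2, Nat.mod_self]
        have h2 : (σ₀.trans (cycleRefl (⟨m - 2, by omega⟩ : Fin m))).symm ⟨0, by omega⟩
            = σ₀.symm ⟨m - 2, by omega⟩ := by
          apply (σ₀.trans (cycleRefl (⟨m - 2, by omega⟩ : Fin m))).injective
          rw [RelIso.apply_symm_apply]
          exact hfwd.symm
        rw [h2]
        exact hc2
    · -- position m-2 is already C₁ side
      have hc2 : Wit (σ₀.symm ⟨0, by omega⟩) ⊆ C₂ := by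
        rcases hor₂ with h | h
        · rcases hS 0 (by omega) (by omega) (by omega) with h' | h'
          · exact absurd h' h
          · exact h'
        · exact absurd hc1 h
      exact ⟨σ₀, hσ₀u, hc1, hc2⟩
  obtain ⟨σ, hσu', hPC₁, hQC₂⟩ := hσfinal
  have hhu' : σ.symm ⟨m - 1, by omega⟩ = hu := by
    have h1 : σ hu = ⟨m - 1, by omega⟩ := Fin.ext hσu'
    rw [← h1]
    exact σ.symm_apply_apply hu
  set P : W := σ.symm ⟨m - 2, by omega⟩ with hPdef
  set Q : W := σ.symm ⟨0, by omega⟩ with hQdef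
  have hPne_hu : P ≠ hu := by
    rw [hPdef, ← hhu']
    intro hc
    have := congrArg Fin.val (σ.toEquiv.symm.injective hc)
    simp only at this
    omega
  have hQne_hu : Q ≠ hu := by
    rw [hQdef, ← hhu']
    intro hc
    have := congrArg Fin.val (σ.toEquiv.symm.injective hc)
    simp only at this
    omega
  have hCadjP : C.Adj hu P := by
    rw [← hhu', hPdef]
    rw [show C.Adj (σ.symm ⟨m - 1, by omega⟩) (σ.symm ⟨m - 2, by omega⟩) ↔
      (cycleGraph m).Adj ⟨m - 1, by omega⟩ ⟨m - 2, by omega⟩ from σ.symm.map_rel_iff]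
    rw [cycleGraph_adj_iff (by omega)]
    exact Or.inr (Or.inl (show m - 2 + 1 = m - 1 by omega))
  have hCadjQ : C.Adj hu Q := by
    rw [← hhu', hQdef]
    rw [show C.Adj (σ.symm ⟨m - 1, by omega⟩) (σ.symm ⟨0, by omega⟩) ↔
      (cycleGraph m).Adj ⟨m - 1, by omega⟩ ⟨0, by omega⟩ from σ.symm.map_rel_iff]
    rw [cycleGraph_adj_iff (by omega)]
    exact Or.inr (Or.inr (Or.inr ⟨rfl, rfl⟩))
  have hnotP : ∀ w', G.Adj u w' → w' ∉ Wit P := by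
    intro w' hw hc
    rcases huniq w' hw with h | h
    · exact Set.disjoint_left.mp (hW.disjoint hu P (Ne.symm hPne_hu)) (h ▸ hK₁.1) hc
    · exact Set.disjoint_left.mp (hW.disjoint hu P (Ne.symm hPne_hu)) (h ▸ hK₂.1) hc
  have hnotQ : ∀ w', G.Adj u w' → w' ∉ Wit Q := by
    intro w' hw hc
    rcases huniq w' hw with h | h
    · exact Set.disjoint_left.mp (hW.disjoint hu Q (Ne.symm hQne_hu)) (h ▸ hK₁.1) hc
    · exact Set.disjoint_left.mp (hW.disjoint hu Q (Ne.symm hQne_hu)) (h ▸ hK₂.1) hc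
  refine ⟨_, insert_witness hW hm σ hσu' (A := insert u (Wit hu ∩ C₁)) (B := Wit hu ∩ C₂)
    (induce_insert_connected hK₁con hK₁ hadj₁) hK₂con ?_ ?_ ?_ ?_ ?_ ?_ ?_⟩
  · -- disjoint
    rw [Set.disjoint_left]
    intro z hz1 hz2
    rcases hz1 with hz1 | hz1
    · exact huC₂ (hz1 ▸ hz2.2)
    · exact Set.disjoint_left.mp hdisj12 hz1.2 hz2.2
  · -- union
    apply Set.Subset.antisymm
    · intro x hx
      rcases hx with hx | hx
      · rcases hx with hx | hx
        · exact hx ▸ hfu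
        · exact hx.1
      · exact hx.1
    · intro x hx
      by_cases hxu : x = u
      · exact Or.inl (Or.inl hxu)
      · rcases hsplitu x hx hxu with hc | hc
        · exact Or.inl (Or.inr ⟨hx, hc⟩)
        · exact Or.inr ⟨hx, hc⟩
  · -- hp : edge from A to Wit P
    obtain ⟨x, hx, y, hy, hxy⟩ := (hW.adj hu P (Ne.symm hPne_hu)).mp hCadjP
    have hxu : x ≠ u := by
      intro hc
      exact hnotP y (hc ▸ hxy) hy
    rcases hsplitu x hx hxu with hc | hc
    · exact ⟨x, Set.mem_insert_of_mem _ ⟨hx, hc⟩, y, hy, hxy⟩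
    · exact absurd hxy.symm (hcross y (hPC₁ hy) x hc)
  · -- hq : edge from B to Wit Q
    obtain ⟨x, hx, y, hy, hxy⟩ := (hW.adj hu Q (Ne.symm hQne_hu)).mp hCadjQ
    have hxu : x ≠ u := by
      intro hc
      exact hnotQ y (hc ▸ hxy) hy
    rcases hsplitu x hx hxu with hc | hc
    · exact absurd hxy (hcross x hc y (hQC₂ hy))
    · exact ⟨x, ⟨hx, hc⟩, y, hy, hxy⟩
  · -- hnAq
    intro a ha b hb hab
    rcases ha with ha | ha
    · exact hnotQ b (ha ▸ hab) hb
    · exact hcross a ha.2 b (hQC₂ hb) hab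
  · -- hnBp
    intro a ha b hb hab
    exact hcross b (hPC₁ hb) a ha.2 hab.symm
  · -- hAB
    exact ⟨u, Set.mem_insert _ _, a₂, hK₂, hadj₂⟩


lemma main_aux {V W : Type} [Finite V] (G : SimpleGraph V) (C : SimpleGraph W) (k : ℕ)
    (h2 : TwoConnected G) (hopt : OptimalCycle G C) (hk : KContractible G C k)
    (Wit : W → Set V) (hW : IsWitnessStructure G C Wit)
    (u v : V) (hdu : Nat.card (G.neighborSet u) = 2)
    (C₁ C₂ : Set V) (hcomp : TwoComponents G u v C₁ C₂)
    (hc₁ : k + 1 ≤ Nat.card C₁) (hc₂ : k + 1 ≤ Nat.card C₂) :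
    ∃ h, Wit h = {u} := by
  classical
  obtain ⟨hd12, hUn, hne₁, hne₂, hcon₁, hcon₂, hnadj⟩ := hcomp
  obtain ⟨hcyc, hcontr, hmax⟩ := hopt
  obtain ⟨m, hm3, ⟨e⟩⟩ := hcyc
  haveI hfinW : Finite W := Finite.of_equiv _ e.toEquiv.symm
  have hcardW : Nat.card W = m := by
    rw [Nat.card_congr e.toEquiv, Nat.card_eq_fintype_card, Fintype.card_fin]
  obtain ⟨n, hnk, hci⟩ := hk
  have hcardV : Nat.card V = m + n := by
    rw [contractsIn_card hci inferInstance, hcardW]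
  -- membership basics
  have hmemC : ∀ x : V, x ≠ u → x ≠ v → x ∈ C₁ ∨ x ∈ C₂ := by
    intro x hx1 hx2
    have : x ∈ C₁ ∪ C₂ := by rw [hUn]; exact ⟨hx1, hx2⟩
    exact this
  have hu1 : u ∉ C₁ := fun hc => ((hUn ▸ (Set.mem_union_left C₂ hc)).1) rfl
  have hu2 : u ∉ C₂ := fun hc => ((hUn ▸ (Set.mem_union_right C₁ hc)).1) rfl
  have hv1 : v ∉ C₁ := fun hc => ((hUn ▸ (Set.mem_union_left C₂ hc)).2) rfl
  have hv2 : v ∉ C₂ := fun hc => ((hUn ▸ (Set.mem_union_right C₁ hc)).2) rfl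
  have hnadj' : ∀ a ∈ C₂, ∀ b ∈ C₁, ¬ G.Adj a b :=
    fun a ha b hb hab => hnadj b hb a ha hab.symm
  -- u ≠ v
  have huv : u ≠ v := by
    intro hc
    obtain ⟨d₁, hd₁⟩ := hne₁
    obtain ⟨d₂, hd₂⟩ := hne₂
    refine no_split (G := G.induce {w : V | w ≠ v}) (h2.2.2 v).preconnected
      (S := {z | z.1 ∈ C₁}) (T := {z | z.1 ∉ C₁}) (fun z => em _) ?_ ?_
      (a := ⟨d₁, fun hh => hv1 (hh ▸ hd₁)⟩) (b := ⟨d₂, fun hh => hv2 (hh ▸ hd₂)⟩)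
      hd₁ (fun hh => Set.disjoint_left.mp hd12 hh hd₂)
    · rw [Set.disjoint_left]
      exact fun z hz1 hz2 => hz2 hz1
    · intro z₁ hz₁ z₂ hz₂ hadj
      have hGadj : G.Adj z₁.1 z₂.1 := hadj
      rcases hmemC z₂.1 (fun hh => z₂.2 (hh.trans hc)) z₂.2 with hh | hh
      · exact hz₂ hh
      · exact hnadj z₁.1 hz₁ z₂.1 hh hGadj
  -- neighbours of u
  have hA₁ : ∃ a ∈ C₁, G.Adj u a := by
    refine exists_adj_side (h2.2.2 v) ?_ hv1 huv hnadj hu1 hne₁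
    intro w hw
    by_cases hwu : w = u
    · exact Or.inl hwu
    · exact Or.inr (hmemC w hwu hw)
  have hA₂ : ∃ a ∈ C₂, G.Adj u a := by
    refine exists_adj_side (h2.2.2 v) ?_ hv2 huv hnadj' hu2 hne₂
    intro w hw
    by_cases hwu : w = u
    · exact Or.inl hwu
    · exact Or.inr ((hmemC w hwu hw).symm)
  obtain ⟨a₁, ha₁C, hadj₁⟩ := hA₁
  obtain ⟨a₂, ha₂C, hadj₂⟩ := hA₂
  have ha12 : a₁ ≠ a₂ := fun hc => Set.disjoint_left.mp hd12 ha₁C (hc ▸ ha₂C)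
  have huniq : ∀ w', G.Adj u w' → w' = a₁ ∨ w' = a₂ := by
    intro w' hw'
    have hsub : ({a₁, a₂} : Set V) ⊆ G.neighborSet u := by
      rintro z (hz | hz)
      · exact hz ▸ hadj₁
      · exact hz ▸ hadj₂
    have hcard2 : (G.neighborSet u).ncard = 2 := by
      rw [← Nat.card_coe_set_eq]
      exact hdu
    have heq : ({a₁, a₂} : Set V) = G.neighborSet u := by
      exact Set.eq_of_subset_of_ncard_le hsub
        (by rw [hcard2, Set.ncard_pair ha12]) (Set.toFinite _)
    have : w' ∈ ({a₁, a₂} : Set V) := heq ▸ hw'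
    exact this
  have hnadjuv : ¬ G.Adj u v := by
    intro hc
    rcases huniq v hc with h | h
    · exact hv1 (h ▸ ha₁C)
    · exact hv2 (h ▸ ha₂C)
  -- witness sets avoiding u,v lie in one side
  have hside : ∀ h : W, u ∉ Wit h → v ∉ Wit h → Wit h ⊆ C₁ ∨ Wit h ⊆ C₂ := by
    intro h hun hvn
    by_cases hbc : ∃ x ∈ Wit h, x ∈ C₁
    · obtain ⟨x, hx, hxC⟩ := hbc
      left
      intro y hy
      by_contra hyC
      have hyC₂ : y ∈ C₂ := by
        rcases hmemC y (fun hh => hun (hh ▸ hy)) (fun hh => hvn (hh ▸ hy)) with hh | hh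
        · exact absurd hh hyC
        · exact hh
      refine no_split (G := G.induce (Wit h)) (hW.connected h).preconnected
        (S := {z | z.1 ∈ C₁}) (T := {z | z.1 ∉ C₁}) (fun z => em _) ?_ ?_
        (a := ⟨x, hx⟩) (b := ⟨y, hy⟩) hxC hyC
      · rw [Set.disjoint_left]
        exact fun z hz1 hz2 => hz2 hz1
      · intro z₁ hz₁ z₂ hz₂ hadj
        have hGadj : G.Adj z₁.1 z₂.1 := hadj
        rcases hmemC z₂.1 (fun hh => hun (hh ▸ z₂.2)) (fun hh => hvn (hh ▸ z₂.2)) with hh | hh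
        · exact hz₂ hh
        · exact hnadj z₁.1 hz₁ z₂.1 hh hGadj
    · right
      intro y hy
      rcases hmemC y (fun hh => hun (hh ▸ hy)) (fun hh => hvn (hh ▸ hy)) with hh | hh
      · exact absurd ⟨y, hy, hh⟩ hbc
      · exact hh
  have hnb : ∀ h : W, ¬ (Wit h ⊆ C₁ ∧ Wit h ⊆ C₂) := by
    rintro h ⟨hs1, hs2⟩
    obtain ⟨z⟩ := (hW.connected h).nonempty
    exact Set.disjoint_left.mp hd12 (hs1 z.2) (hs2 z.2)
  -- witness sets inside each component
  obtain ⟨t₁, ht₁⟩ := exists_subset_witness hW (D := C₁) (by omega)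
  obtain ⟨t₂, ht₂⟩ := exists_subset_witness hW (D := C₂) (by omega)
  -- names
  obtain ⟨hu, hfu⟩ := hW.cover u
  obtain ⟨hv, hfv⟩ := hW.cover v
  have ht₁u : t₁ ≠ hu := fun hc => hu1 (ht₁ (hc ▸ hfu))
  have ht₂u : t₂ ≠ hu := fun hc => hu2 (ht₂ (hc ▸ hfu))
  have ht₁v : t₁ ≠ hv := fun hc => hv1 (ht₁ (hc ▸ hfv))
  have ht₂v : t₂ ≠ hv := fun hc => hv2 (ht₂ (hc ▸ hfv))
  have hmemu : ∀ h : W, u ∈ Wit h → h = hu := fun h hh => mem_unique hW hh hfu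
  have hmemv : ∀ h : W, v ∈ Wit h → h = hv := fun h hh => mem_unique hW hh hfv
  haveI : NeZero m := ⟨by omega⟩
  have hxeq : ∀ (x : Fin m) (h : W), u ∈ Wit (e.symm x) → x = e h → False → True := fun _ _ _ _ _ => trivial
  -- Step D1 : hu ≠ hv
  have hne_uv : hu ≠ hv := by
    intro hc
    refine cycle_split_contra hW e (s := {x : Fin m | 1 ≤ ((x - e hu : Fin m)).val})
      (cycle_remove_connected hm3 le_rfl (by omega) (e hu)) hnadj ?_ hnb
      (t₁ := t₁) (t₂ := t₂) ?_ ?_ ht₁ ht₂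
    · intro x hx
      have hxne : x ≠ e hu := fin_ne_iff_one_le.mpr hx
      apply hside
      · intro hcu
        apply hxne
        have h1 : e.symm x = hu := hmemu _ hcu
        have := congrArg e h1
        rwa [e.apply_symm_apply] at this
      · intro hcv
        apply hxne
        have h1 : e.symm x = hv := hmemv _ hcv
        rw [← hc] at h1
        have := congrArg e h1
        rwa [e.apply_symm_apply] at this
    · exact fin_ne_iff_one_le.mp (fun hh => ht₁u (e.toEquiv.injective hh))
    · exact fin_ne_iff_one_le.mp (fun hh => ht₂u (e.toEquiv.injective hh))
  have hvnot : v ∉ Wit hu := fun hcm => hne_uv (hmemv hu hcm)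
  have hunot : ∀ h : W, h ≠ hu → u ∉ Wit h := fun h hh hcm => hh (hmemu h hcm)
  have hvnot' : ∀ h : W, h ≠ hv → v ∉ Wit h := fun h hh hcm => hh (hmemv h hcm)
  -- Step D2 : hu and hv are not adjacent in the cycle
  have hCadj_uv : ¬ C.Adj hu hv := by
    intro hcadj
    have hpos : (cycleGraph m).Adj (e hu) (e hv) := e.map_rel_iff.mpr hcadj
    rw [cycleGraph_adj'] at hpos
    have hkey : ∃ i : Fin m, ∀ x : Fin m, (x ≠ e hu ∧ x ≠ e hv) ↔ (x ≠ i ∧ x ≠ i + 1) := by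
      rcases hpos with h | h
      · have h1 : e hu - e hv = 1 := Fin.ext (by rw [h, fin_val_one (by omega)])
        have h2 : e hu = e hv + 1 := by
          rw [sub_eq_iff_eq_add] at h1
          rw [h1, add_comm]
        exact ⟨e hv, fun x => by rw [h2]; tauto⟩
      · have h1 : e hv - e hu = 1 := Fin.ext (by rw [h, fin_val_one (by omega)])
        have h2 : e hv = e hu + 1 := by
          rw [sub_eq_iff_eq_add] at h1
          rw [h1, add_comm]
        exact ⟨e hu, fun x => by rw [h2]⟩
    obtain ⟨i, hi⟩ := hkey
    refine cycle_split_contra hW e (s := {x : Fin m | 2 ≤ ((x - i : Fin m)).val})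
      (cycle_remove_connected hm3 (by omega) (by omega) i) hnadj ?_ hnb
      (t₁ := t₁) (t₂ := t₂) ?_ ?_ ht₁ ht₂
    · intro x hx
      have hx3 := (hi x).mpr ((fin_ne_two_iff (by omega)).mpr hx)
      apply hside
      · intro hcu
        apply hx3.1
        have h1 : e.symm x = hu := hmemu _ hcu
        have := congrArg e h1
        rwa [e.apply_symm_apply] at this
      · intro hcv
        apply hx3.2
        have h1 : e.symm x = hv := hmemv _ hcv
        have := congrArg e h1
        rwa [e.apply_symm_apply] at this
    · exact (fin_ne_two_iff (by omega)).mp ((hi (e t₁)).mp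
        ⟨fun hh => ht₁u (e.toEquiv.injective hh), fun hh => ht₁v (e.toEquiv.injective hh)⟩)
    · exact (fin_ne_two_iff (by omega)).mp ((hi (e t₂)).mp
        ⟨fun hh => ht₂u (e.toEquiv.injective hh), fun hh => ht₂v (e.toEquiv.injective hh)⟩)
  -- Step E : main argument
  by_contra hbad
  push_neg at hbad
  have hwex : ∃ w ∈ Wit hu, w ≠ u := by
    by_contra hno
    push_neg at hno
    exact hbad hu (Set.eq_singleton_iff_unique_mem.mpr ⟨hfu, hno⟩)
  obtain ⟨w, hwW, hwu⟩ := hwex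
  have hsplitu : ∀ x ∈ Wit hu, x ≠ u → x ∈ C₁ ∨ x ∈ C₂ :=
    fun x hx hxu => hmemC x hxu (fun hh => hvnot (hh ▸ hx))
  have hsplitu' : ∀ x ∈ Wit hu, x ≠ u → x ∈ C₂ ∨ x ∈ C₁ :=
    fun x hx hxu => (hsplitu x hx hxu).symm
  have hNuniq₁ : ∀ w', G.Adj u w' → w' ∈ C₁ → w' = a₁ := by
    intro w' hw hcm
    rcases huniq w' hw with h | h
    · exact h
    · exact absurd (h ▸ hcm) (fun hh => Set.disjoint_left.mp hd12 hh ha₂C)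
  have hNuniq₂ : ∀ w', G.Adj u w' → w' ∈ C₂ → w' = a₂ := by
    intro w' hw hcm
    rcases huniq w' hw with h | h
    · exact absurd (h ▸ hcm) (fun hh => Set.disjoint_left.mp hd12 ha₁C hh)
    · exact h
  suffices hlonger : ∃ Wit' : Fin (m + 1) → Set V,
      IsWitnessStructure G (cycleGraph (m + 1)) Wit' by
    obtain ⟨Wit', hWit'⟩ := hlonger
    have hcontr' := witness_contractible hWit'
    have hle := hmax (Fin (m + 1)) (cycleGraph (m + 1))
      ⟨m + 1, by omega, ⟨⟨Equiv.refl _, Iff.rfl⟩⟩⟩ hcontr'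
    rw [hcardW, Nat.card_eq_fintype_card, Fintype.card_fin] at hle
    omega
  by_cases hK₂e : (Wit hu ∩ C₂).Nonempty
  · by_cases hK₁e : (Wit hu ∩ C₁).Nonempty
    · -- both sides are met
      obtain ⟨x₁, hx₁⟩ := hK₁e
      obtain ⟨x₂, hx₂⟩ := hK₂e
      obtain ⟨ha₁K, _⟩ := witness_reach_side hW hfu hsplitu hnadj hu1 hNuniq₁ hx₁.1 hx₁.2
      obtain ⟨ha₂K, _⟩ := witness_reach_side hW hfu hsplitu' hnadj' hu2 hNuniq₂ hx₂.1 hx₂.2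
      have hK₁con : (G.induce (Wit hu ∩ C₁)).Connected := by
        rw [connected_iff]
        refine ⟨?_, ⟨⟨a₁, ha₁K⟩⟩⟩
        intro z₁ z₂
        obtain ⟨h1, r1⟩ := witness_reach_side hW hfu hsplitu hnadj hu1 hNuniq₁ z₁.2.1 z₁.2.2
        obtain ⟨h2, r2⟩ := witness_reach_side hW hfu hsplitu hnadj hu1 hNuniq₁ z₂.2.1 z₂.2.2
        exact r1.trans r2.symm
      have hK₂con : (G.induce (Wit hu ∩ C₂)).Connected := by
        rw [connected_iff]
        refine ⟨?_, ⟨⟨a₂, ha₂K⟩⟩⟩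
        intro z₁ z₂
        obtain ⟨h1, r1⟩ := witness_reach_side hW hfu hsplitu' hnadj' hu2 hNuniq₂ z₁.2.1 z₁.2.2
        obtain ⟨h2, r2⟩ := witness_reach_side hW hfu hsplitu' hnadj' hu2 hNuniq₂ z₂.2.1 z₂.2.2
        exact r1.trans r2.symm
      exact both_sides_case hW hm3 e hfu hne_uv hCadj_uv hd12 hnadj hu1 hu2
        (fun h hh1 hh2 => hside h (hunot h hh1) (hvnot' h hh2)) hnb ht₁ ht₂
        ht₁u ht₁v ht₂u ht₂v hsplitu ha₁K ha₂K hK₁con hK₂con hadj₁ hadj₂ huniq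
    · -- C₁ side of Wit hu is empty
      have hKe : Wit hu ∩ C₁ = ∅ := Set.not_nonempty_iff_eq_empty.mp hK₁e
      obtain ⟨x₂, hx₂⟩ := hK₂e
      obtain ⟨ha₂K, _⟩ := witness_reach_side hW hfu hsplitu' hnadj' hu2 hNuniq₂ hx₂.1 hx₂.2
      have hK₂con : (G.induce (Wit hu ∩ C₂)).Connected := by
        rw [connected_iff]
        refine ⟨?_, ⟨⟨a₂, ha₂K⟩⟩⟩
        intro z₁ z₂
        obtain ⟨h1, r1⟩ := witness_reach_side hW hfu hsplitu' hnadj' hu2 hNuniq₂ z₁.2.1 z₁.2.2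
        obtain ⟨h2, r2⟩ := witness_reach_side hW hfu hsplitu' hnadj' hu2 hNuniq₂ z₂.2.1 z₂.2.2
        exact r1.trans r2.symm
      obtain ⟨q₀, hq₀⟩ := hW.cover a₁
      have hq₀hu : q₀ ≠ hu := by
        intro hcm
        have : a₁ ∈ Wit hu ∩ C₁ := ⟨hcm ▸ hq₀, ha₁C⟩
        rw [hKe] at this
        exact this
      have hCadjq : C.Adj hu q₀ := (hW.adj hu q₀ hq₀hu.symm).mpr ⟨u, hfu, a₁, hq₀, hadj₁⟩
      have hq₀hv : q₀ ≠ hv := fun hcm => hCadj_uv (hcm ▸ hCadjq)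
      have hWitq₀ : Wit q₀ ⊆ C₁ := by
        rcases hside q₀ (hunot q₀ hq₀hu) (hvnot' q₀ hq₀hv) with hh | hh
        · exact hh
        · exact absurd (hh hq₀) (fun hk => Set.disjoint_left.mp hd12 ha₁C hk)
      exact far_empty_case hW hm3 e hfu hnadj' hu2 hsplitu' hKe hK₂con ha₂K hadj₂ hadj₁
        (fun w' hw' => (huniq w' hw').symm) hq₀ ha₁C hWitq₀
  · -- C₂ side of Wit hu is empty
    have hKe : Wit hu ∩ C₂ = ∅ := Set.not_nonempty_iff_eq_empty.mp hK₂e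
    have hwC₁ : w ∈ C₁ := by
      rcases hsplitu w hwW hwu with hh | hh
      · exact hh
      · exact absurd (hKe ▸ (⟨hwW, hh⟩ : w ∈ Wit hu ∩ C₂)) (Set.notMem_empty w)
    obtain ⟨ha₁K, _⟩ := witness_reach_side hW hfu hsplitu hnadj hu1 hNuniq₁ hwW hwC₁
    have hK₁con : (G.induce (Wit hu ∩ C₁)).Connected := by
      rw [connected_iff]
      refine ⟨?_, ⟨⟨a₁, ha₁K⟩⟩⟩
      intro z₁ z₂
      obtain ⟨h1, r1⟩ := witness_reach_side hW hfu hsplitu hnadj hu1 hNuniq₁ z₁.2.1 z₁.2.2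
      obtain ⟨h2, r2⟩ := witness_reach_side hW hfu hsplitu hnadj hu1 hNuniq₁ z₂.2.1 z₂.2.2
      exact r1.trans r2.symm
    obtain ⟨q₀, hq₀⟩ := hW.cover a₂
    have hq₀hu : q₀ ≠ hu := by
      intro hcm
      have : a₂ ∈ Wit hu ∩ C₂ := ⟨hcm ▸ hq₀, ha₂C⟩
      rw [hKe] at this
      exact this
    have hCadjq : C.Adj hu q₀ := (hW.adj hu q₀ hq₀hu.symm).mpr ⟨u, hfu, a₂, hq₀, hadj₂⟩
    have hq₀hv : q₀ ≠ hv := fun hcm => hCadj_uv (hcm ▸ hCadjq)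
    have hWitq₀ : Wit q₀ ⊆ C₂ := by
      rcases hside q₀ (hunot q₀ hq₀hu) (hvnot' q₀ hq₀hv) with hh | hh
      · exact absurd (hh hq₀) (fun hk => Set.disjoint_left.mp hd12 hk ha₂C)
      · exact hh
    exact far_empty_case hW hm3 e hfu hnadj hu1 hsplitu hKe hK₁con ha₁K hadj₁ hadj₂
      huniq hq₀ ha₂C hWitq₀

/-- If `G` is 2-connected and `k`-contractible to an optimal cycle `C`
with witness structure `Wit`, and `u`, `v` are degree-2 vertices such that `G − {u, v}`
has exactly two components each with at least `k + 1` vertices, then `{u}` and `{v}`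
are small witness sets. -/
theorem stmt11 {V W : Type} [Finite V] (G : SimpleGraph V) (C : SimpleGraph W) (k : ℕ)
    (h2 : TwoConnected G) (hopt : OptimalCycle G C) (hk : KContractible G C k)
    (Wit : W → Set V) (hW : IsWitnessStructure G C Wit)
    (u v : V) (hdu : Nat.card (G.neighborSet u) = 2)
    (hdv : Nat.card (G.neighborSet v) = 2)
    (C₁ C₂ : Set V) (hcomp : TwoComponents G u v C₁ C₂)
    (hc₁ : k + 1 ≤ Nat.card C₁) (hc₂ : k + 1 ≤ Nat.card C₂) :
    (∃ h, Wit h = {u}) ∧ (∃ h, Wit h = {v}) := by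
  obtain ⟨hd12, hUn, hne₁, hne₂, hcon₁, hcon₂, hnadj⟩ := hcomp
  have hcomp' : TwoComponents G v u C₁ C₂ := by
    refine ⟨hd12, ?_, hne₁, hne₂, hcon₁, hcon₂, hnadj⟩
    rw [hUn]
    ext x
    exact and_comm
  constructor
  · exact main_aux G C k h2 hopt hk Wit hW u v hdu C₁ C₂
      ⟨hd12, hUn, hne₁, hne₂, hcon₁, hcon₂, hnadj⟩ hc₁ hc₂
  · exact main_aux G C k h2 hopt hk Wit hW v u hdv C₁ C₂ hcomp' hc₁ hc₂
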